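/- Let V be a real vector space of finite dimension 4 and let e₁, e₂, e₃ ∈ V be linearly independent. The linear map V × V × V → ⋀²V × ⋀²V × ⋀²V defined by (X₁, X₂, X₃) ↦ (e₁∧X₂ − e₂∧X₁, e₁∧X₃ − e₃∧X₁, e₂∧X₃ − e₃∧X₂) is injective. (This is the pointwise statement that the boundary map W_{∂}^{(1,1)} is injective.) -/

import Mathlib

/-!
Contracting `eᵢ ∧ Xⱼ = eⱼ ∧ Xᵢ` with the functional `fⱼ` dual to `eⱼ` gives
`Xᵢ = fⱼ(Xᵢ) eⱼ - fⱼ(Xⱼ) eᵢ` for all `i ≠ j`. Reading off `fₖ`-coordinates, the off-diagonal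
entries `fₖ(Xᵢ)` vanish as soon as a third index is available, and the diagonal entries satisfy
`fᵢ(Xᵢ) = -fⱼ(Xⱼ)` for all `i ≠ j`; for three indices this gives `2 fᵢ(Xᵢ) = 0`.
-/

open ExteriorAlgebra

variable {V : Type*} [AddCommGroup V] [Module ℝ V]

/-- The pointwise boundary map `W_{∂}^{(1,1)} : V³ → (⋀²V)³`,
`(X₁,X₂,X₃) ↦ (e₁∧X₂ − e₂∧X₁, e₁∧X₃ − e₃∧X₁, e₂∧X₃ − e₃∧X₂)`
(valued in the exterior algebra). -/
noncomputable def Wb11 (e₁ e₂ e₃ : V) :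
    V × V × V →ₗ[ℝ]
      ExteriorAlgebra ℝ V × ExteriorAlgebra ℝ V × ExteriorAlgebra ℝ V :=
  let p₁ : V × V × V →ₗ[ℝ] ExteriorAlgebra ℝ V :=
    (ι ℝ).comp (LinearMap.fst ℝ V (V × V))
  let p₂ : V × V × V →ₗ[ℝ] ExteriorAlgebra ℝ V :=
    (ι ℝ).comp ((LinearMap.fst ℝ V V).comp (LinearMap.snd ℝ V (V × V)))
  let p₃ : V × V × V →ₗ[ℝ] ExteriorAlgebra ℝ V :=
    (ι ℝ).comp ((LinearMap.snd ℝ V V).comp (LinearMap.snd ℝ V (V × V)))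
  ((LinearMap.mulLeft ℝ (ι ℝ e₁)).comp p₂ - (LinearMap.mulLeft ℝ (ι ℝ e₂)).comp p₁).prod
    (((LinearMap.mulLeft ℝ (ι ℝ e₁)).comp p₃ - (LinearMap.mulLeft ℝ (ι ℝ e₃)).comp p₁).prod
      ((LinearMap.mulLeft ℝ (ι ℝ e₂)).comp p₃ - (LinearMap.mulLeft ℝ (ι ℝ e₃)).comp p₂))

theorem LinearIndependent.exists_dual_apply_eq_ite {K M ι : Type*} [Field K] [AddCommGroup M]
    [Module K M] [DecidableEq ι] {v : ι → M} (hv : LinearIndependent K v) :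
    ∃ f : ι → Module.Dual K M, ∀ i j, f i (v j) = if i = j then 1 else 0 := by
  let W := Submodule.span K (Set.range v)
  obtain ⟨p, hp⟩ := W.subtype.exists_leftInverse_of_injective W.ker_subtype
  refine ⟨fun i ↦ (Module.Basis.span hv).coord i ∘ₗ p, fun i j ↦ ?_⟩
  have hpv : p (v j) = Module.Basis.span hv j := by
    rw [Module.Basis.span_apply]
    exact LinearMap.congr_fun hp ⟨v j, _⟩
  simp [hpv, Finsupp.single_apply, eq_comm]

open CliffordAlgebra

namespace ExteriorAlgebra

variable {R M : Type*} [CommRing R] [AddCommGroup M] [Module R M]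

theorem contractLeft_ι_mul_ι (d : Module.Dual R M) (a b : M) :
    contractLeft d (ι R a * ι R b) = ι R (d a • b - d b • a) := by
  rw [contractLeft_ι_mul, contractLeft_ι, map_sub, map_smul, ← Algebra.commutes,
    ← Algebra.smul_def]
  simp

theorem eq_smul_sub_smul_of_ι_mul_ι_eq {u v x y : M} (h : ι R u * ι R x = ι R v * ι R y)
    {d : Module.Dual R M} (hu : d u = 0) (hv : d v = 1) :
    y = d y • v - d x • u := by
  have h' := congrArg (contractLeft d) h
  rw [contractLeft_ι_mul_ι, contractLeft_ι_mul_ι, ι_inj, hu, hv] at h'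
  linear_combination (norm := module) -h'

theorem eq_zero_of_forall_ι_mul_ι_symm {K κ : Type*} [Field K] [NeZero (2 : K)] [Module K M]
    {e X : κ → M} (he : LinearIndependent K e) (hthird : ∀ i j : κ, ∃ k, k ≠ i ∧ k ≠ j)
    (h : ∀ i j, ι K (e i) * ι K (X j) = ι K (e j) * ι K (X i)) :
    X = 0 := by
  classical
  obtain ⟨f, hf⟩ := he.exists_dual_apply_eq_ite
  have hX : ∀ i j, i ≠ j → X i = f j (X i) • e j - f j (X j) • e i := fun i j hij ↦
    eq_smul_sub_smul_of_ι_mul_ι_eq (h i j) (by simp [hf, hij.symm]) (by simp [hf])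
  have hcoord : ∀ i j k, i ≠ j →
      f k (X i) = f j (X i) * (if k = j then 1 else 0) - f j (X j) * (if k = i then 1 else 0) :=
    fun i j k hij ↦ by simpa [hf] using congrArg (f k) (hX i j hij)
  have hdiag_antisymm : ∀ i j, i ≠ j → f i (X i) = -f j (X j) := fun i j hij ↦ by
    simpa [hij] using hcoord i j i hij
  have hoff : ∀ i k, k ≠ i → f k (X i) = 0 := fun i k hki ↦ by
    obtain ⟨j, hji, hjk⟩ := hthird i k
    simpa [hki, hjk.symm] using hcoord i j k hji.symm
  have hdiag : ∀ i, f i (X i) = 0 := fun i ↦ by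
    obtain ⟨j, hji, -⟩ := hthird i i
    obtain ⟨k, hki, hkj⟩ := hthird i j
    have h2 : (2 : K) * f i (X i) = 0 := by
      linear_combination hdiag_antisymm i j hji.symm + hdiag_antisymm i k hki.symm
        - hdiag_antisymm j k hkj.symm
    exact (mul_eq_zero.mp h2).resolve_left two_ne_zero
  funext i
  obtain ⟨j, hji, -⟩ := hthird i i
  rw [hX i j hji.symm, hoff i j hji, hdiag j]
  simp

end ExteriorAlgebra

theorem Wb11_injective_general (e₁ e₂ e₃ : V)
    (hind : LinearIndependent ℝ ![e₁, e₂, e₃]) :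
    Function.Injective (Wb11 e₁ e₂ e₃) := by
  refine (injective_iff_map_eq_zero _).mpr ?_
  rintro ⟨X₁, X₂, X₃⟩ h
  simp only [Wb11, LinearMap.prod_apply, Function.prod, LinearMap.sub_apply, LinearMap.comp_apply,
    LinearMap.mulLeft_apply, LinearMap.fst_apply, LinearMap.snd_apply, Prod.mk_eq_zero,
    sub_eq_zero] at h
  obtain ⟨h₁₂, h₁₃, h₂₃⟩ := h
  have hX : ![X₁, X₂, X₃] = 0 :=
    eq_zero_of_forall_ι_mul_ι_symm hind (by decide) fun i j ↦ by
      fin_cases i <;> fin_cases j <;> simp [h₁₂, h₁₃, h₂₃]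
  exact Prod.ext (congrFun hX 0) (Prod.ext (congrFun hX 1) (congrFun hX 2))

/-- For `V` 4-dimensional and `e₁, e₂, e₃` linearly independent, the map
`(X₁,X₂,X₃) ↦ (e₁∧X₂ − e₂∧X₁, e₁∧X₃ − e₃∧X₁, e₂∧X₃ − e₃∧X₂)` from `V³` is injective. -/
theorem Wb11_injective [FiniteDimensional ℝ V]
    (hdim : Module.finrank ℝ V = 4) (e₁ e₂ e₃ : V)
    (hind : LinearIndependent ℝ ![e₁, e₂, e₃]) :
    Function.Injective (Wb11 e₁ e₂ e₃) :=
  Wb11_injective_general e₁ e₂ e₃ hind
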